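/- arXiv:2604.07426 — 2 statements merged into one kernel-verified Lean document; each statement's English description precedes it below -/
import Mathlib

section
/- (Performance Difference Lemma.) Let M = ⟨S, A, P, R, γ⟩ be a finite MDP with discount γ ∈ [0,1). Then for any two deterministic policies π, π' : S → A and any initial state s0 ∈ S, V^π_M(s0) − V^{π'}_M(s0) = (1/(1−γ)) · ∑_{(s,a)∈S×A} ρ^π_{M,s0}(s,a) · A^{π'}_M(s,a), where A^{π'}_M(s,a) = Q^{π'}_M(s,a) − V^{π'}_M(s) and Q^{π'}_M(s,a) = R(s,a) + γ ∑_{s'∈S} P(s'|s,a) V^{π'}_M(s'). -/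
/-!
Let `d_t` be the state distribution at time `t` under `π` and `V' = V^{π'}`. For every `t`,
`γ^t E_{d_t}[A^{π'}(s, π s)] = γ^t E_{d_t}[R(s, π s)] + (γ^{t+1} E_{d_{t+1}}[V'] - γ^t E_{d_t}[V'])`,
because `d_{t+1}` is `d_t` pushed through `P(· | s, π s)`. Summing over `t`, the first terms add up
to `V^π(s0)` and the differences telescope to `-V'(s0)`. On the other side, the occupancy measure
of `π` is supported on the pairs `(s, π s)`, with mass `(1 - γ) ∑_t γ^t d_t(s)` there.
-/

open Finset

/-- `p` is a probability mass function on the finite type `S`. -/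
def IsPMF {S : Type*} [Fintype S] (p : S → ℝ) : Prop :=
  (∀ s, 0 ≤ p s) ∧ ∑ s, p s = 1

/-- Integral probability metric over the unit-sup-norm function class. -/
noncomputable def IPM {S : Type*} [Fintype S] (p q : S → ℝ) : ℝ :=
  sSup {x : ℝ | ∃ f : S → ℝ, (∀ s, |f s| ≤ 1) ∧
    x = |∑ s, f s * p s - ∑ s, f s * q s|}

/-- The distribution of the state after `t` steps starting from `s0`,
following the deterministic policy `π` under the kernel `P`. -/
noncomputable def stateDist {S A : Type*} [Fintype S] [DecidableEq S]
    (P : S → A → S → ℝ) (π : S → A) (s0 : S) : ℕ → S → ℝ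
  | 0 => fun s => if s = s0 then 1 else 0
  | (t + 1) => fun s' => ∑ s, stateDist P π s0 t s * P s (π s) s'

/-- The value function `V^π_M(s0) = ∑_{t=0}^∞ γ^t E[R(s_t, a_t)]`. -/
noncomputable def valueFn {S A : Type*} [Fintype S] [DecidableEq S]
    (P : S → A → S → ℝ) (R : S → A → ℝ) (γ : ℝ) (π : S → A) (s0 : S) : ℝ :=
  ∑' t : ℕ, γ ^ t * ∑ s, stateDist P π s0 t s * R s (π s)

/-- The discounted state-action occupancy measure
`ρ^π_{M,s0}(s,a) = (1-γ) ∑_t γ^t Pr(s_t = s, a_t = a)`. -/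
noncomputable def occupancy {S A : Type*} [Fintype S] [DecidableEq S] [DecidableEq A]
    (P : S → A → S → ℝ) (γ : ℝ) (π : S → A) (s0 : S) (s : S) (a : A) : ℝ :=
  (1 - γ) * ∑' t : ℕ, γ ^ t * (if π s = a then stateDist P π s0 t s else 0)

/-- The state-action value function
`Q^π_M(s,a) = R(s,a) + γ ∑_{s'} P(s'|s,a) V^π_M(s')`. -/
noncomputable def qFn {S A : Type*} [Fintype S] [DecidableEq S]
    (P : S → A → S → ℝ) (R : S → A → ℝ) (γ : ℝ) (π : S → A) (s : S) (a : A) : ℝ :=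
  R s a + γ * ∑ s', P s a s' * valueFn P R γ π s'

/-- The advantage function `A^π_M(s,a) = Q^π_M(s,a) − V^π_M(s)`. -/
noncomputable def advFn {S A : Type*} [Fintype S] [DecidableEq S]
    (P : S → A → S → ℝ) (R : S → A → ℝ) (γ : ℝ) (π : S → A) (s : S) (a : A) : ℝ :=
  qFn P R γ π s a - valueFn P R γ π s

theorem Summable.tsum_nat_succ_sub {G : Type*} [AddCommGroup G] [TopologicalSpace G]
    [IsTopologicalAddGroup G] [T2Space G] {u : ℕ → G} (hu : Summable u) :
    ∑' t, (u (t + 1) - u t) = -u 0 := by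
  rw [((summable_nat_add_iff 1).2 hu).tsum_sub hu, hu.tsum_eq_zero_add]
  abel

theorem summable_pow_mul_of_abs_le {γ : ℝ} (hγ0 : 0 ≤ γ) (hγ1 : γ < 1) {c : ℕ → ℝ} {C : ℝ}
    (hc : ∀ t, |c t| ≤ C) : Summable fun t => γ ^ t * c t :=
  ((summable_geometric_of_lt_one hγ0 hγ1).mul_right C).of_norm_bounded fun t => by
    rw [Real.norm_eq_abs, abs_mul, abs_pow, abs_of_nonneg hγ0]
    exact mul_le_mul_of_nonneg_left (hc t) (pow_nonneg hγ0 t)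

section StateDist

variable {S A : Type*} [Fintype S] [DecidableEq S] {P : S → A → S → ℝ} {π : S → A} {s0 : S}
  {γ : ℝ}

theorem stateDist_nonneg (hP : ∀ s a, IsPMF (P s a)) (t : ℕ) (s : S) :
    0 ≤ stateDist P π s0 t s := by
  induction t generalizing s with
  | zero => simp only [stateDist]; split <;> norm_num
  | succ t ih => exact sum_nonneg fun s' _ => mul_nonneg (ih s') ((hP s' (π s')).1 s)

theorem sum_stateDist_succ_mul (f : S → ℝ) (t : ℕ) :
    ∑ s', stateDist P π s0 (t + 1) s' * f s' =
      ∑ s, stateDist P π s0 t s * ∑ s', P s (π s) s' * f s' := by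
  simp only [stateDist, sum_mul, mul_sum, mul_assoc]
  exact sum_comm

theorem sum_stateDist (hP : ∀ s a, IsPMF (P s a)) (t : ℕ) :
    ∑ s, stateDist P π s0 t s = 1 := by
  induction t with
  | zero => simp [stateDist]
  | succ t ih =>
    simpa [(hP _ _).2, ih] using sum_stateDist_succ_mul (P := P) (π := π) (s0 := s0) 1 t

theorem stateDist_le_one (hP : ∀ s a, IsPMF (P s a)) (t : ℕ) (s : S) :
    stateDist P π s0 t s ≤ 1 :=
  sum_stateDist hP t ▸
    single_le_sum (fun s' _ => stateDist_nonneg hP t s') (mem_univ s)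

theorem abs_stateDist_mul_le (hP : ∀ s a, IsPMF (P s a)) (t : ℕ) (s : S) (c : ℝ) :
    |stateDist P π s0 t s * c| ≤ |c| := by
  rw [abs_mul, abs_of_nonneg (stateDist_nonneg hP t s)]
  exact mul_le_of_le_one_left (abs_nonneg c) (stateDist_le_one hP t s)

theorem summable_pow_mul_sum_stateDist_mul (hP : ∀ s a, IsPMF (P s a))
    (hγ0 : 0 ≤ γ) (hγ1 : γ < 1) (f : S → ℝ) :
    Summable fun t => γ ^ t * ∑ s, stateDist P π s0 t s * f s :=
  summable_pow_mul_of_abs_le hγ0 hγ1 fun t =>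
    (abs_sum_le_sum_abs _ _).trans (sum_le_sum fun s _ => abs_stateDist_mul_le hP t s (f s))

theorem sum_tsum_pow_mul_stateDist_mul (hP : ∀ s a, IsPMF (P s a))
    (hγ0 : 0 ≤ γ) (hγ1 : γ < 1) (f : S → ℝ) :
    ∑ s, ∑' t, γ ^ t * (stateDist P π s0 t s * f s) =
      ∑' t, γ ^ t * ∑ s, stateDist P π s0 t s * f s := by
  simp_rw [mul_sum]
  exact (Summable.tsum_finsetSum fun s _ =>
    summable_pow_mul_of_abs_le hγ0 hγ1 fun t => abs_stateDist_mul_le hP t s (f s)).symm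

theorem valueFn_sub_eq_tsum {R : S → A → ℝ} (hP : ∀ s a, IsPMF (P s a)) (hγ0 : 0 ≤ γ)
    (hγ1 : γ < 1) (W : S → ℝ) :
    valueFn P R γ π s0 - W s0 =
      ∑' t, γ ^ t * ∑ s, stateDist P π s0 t s *
        (R s (π s) + γ * ∑ s', P s (π s) s' * W s' - W s) := by
  set u : ℕ → ℝ := fun t => γ ^ t * ∑ s, stateDist P π s0 t s * W s
  have hu0 : u 0 = W s0 := by simp [u, stateDist]
  have hterm : ∀ t, γ ^ t * ∑ s, stateDist P π s0 t s *
      (R s (π s) + γ * ∑ s', P s (π s) s' * W s' - W s) =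
        γ ^ t * ∑ s, stateDist P π s0 t s * R s (π s) + (u (t + 1) - u t) := fun t => by
    simp only [u, sum_stateDist_succ_mul, mul_sub, mul_add, sum_sub_distrib, sum_add_distrib,
      mul_left_comm _ γ, ← mul_sum, pow_succ]
    ring
  have hr : Summable fun t => γ ^ t * ∑ s, stateDist P π s0 t s * R s (π s) :=
    summable_pow_mul_sum_stateDist_mul hP hγ0 hγ1 _
  have hu : Summable u := summable_pow_mul_sum_stateDist_mul hP hγ0 hγ1 W
  rw [tsum_congr hterm, hr.tsum_add (((summable_nat_add_iff 1).2 hu).sub hu),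
    hu.tsum_nat_succ_sub, hu0, valueFn, sub_eq_add_neg]

end StateDist

theorem sum_occupancy_mul {S A : Type*} [Fintype S] [DecidableEq S] [Fintype A] [DecidableEq A]
    (P : S → A → S → ℝ) (γ : ℝ) (π : S → A) (s0 s : S) (g : A → ℝ) :
    ∑ a, occupancy P γ π s0 s a * g a =
      (1 - γ) * ∑' t, γ ^ t * (stateDist P π s0 t s * g (π s)) := by
  rw [sum_eq_single_of_mem (π s) (mem_univ _) fun a _ ha => by simp [occupancy, Ne.symm ha]]
  simp only [occupancy, if_true, mul_assoc, ← tsum_mul_right]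

theorem performance_difference_lemma_general
    {S A : Type*} [Fintype S] [DecidableEq S]
    [Fintype A] [DecidableEq A]
    (P : S → A → S → ℝ) (R : S → A → ℝ) (γ : ℝ)
    (hP : ∀ s a, IsPMF (P s a))
    (hγ0 : 0 ≤ γ) (hγ1 : γ < 1)
    (π π' : S → A) (s0 : S) :
    valueFn P R γ π s0 - valueFn P R γ π' s0 =
      (1 / (1 - γ)) *
        ∑ s, ∑ a, occupancy P γ π s0 s a * advFn P R γ π' s a := by
  have hγ : 1 - γ ≠ 0 := by linarith
  calc valueFn P R γ π s0 - valueFn P R γ π' s0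
      = ∑' t, γ ^ t * ∑ s, stateDist P π s0 t s * advFn P R γ π' s (π s) :=
        valueFn_sub_eq_tsum hP hγ0 hγ1 _
    _ = ∑ s, ∑' t, γ ^ t * (stateDist P π s0 t s * advFn P R γ π' s (π s)) :=
        (sum_tsum_pow_mul_stateDist_mul hP hγ0 hγ1 _).symm
    _ = (1 / (1 - γ)) * ∑ s, ∑ a, occupancy P γ π s0 s a * advFn P R γ π' s a := by
        simp_rw [sum_occupancy_mul, ← mul_sum]
        field_simp

/-- **Performance Difference Lemma.** For any two deterministic policies `π, π'`
and initial state `s0`,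
`V^π(s0) − V^{π'}(s0) = (1/(1-γ)) ∑_{s,a} ρ^π_{s0}(s,a) · A^{π'}(s,a)`. -/
theorem performance_difference_lemma
    {S A : Type*} [Fintype S] [DecidableEq S] [Nonempty S]
    [Fintype A] [DecidableEq A] [Nonempty A]
    (P : S → A → S → ℝ) (R : S → A → ℝ) (Rmax γ : ℝ)
    (hP : ∀ s a, IsPMF (P s a))
    (hR : ∀ s a, |R s a| ≤ Rmax)
    (hγ0 : 0 ≤ γ) (hγ1 : γ < 1)
    (π π' : S → A) (s0 : S) :
    valueFn P R γ π s0 - valueFn P R γ π' s0 =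
      (1 / (1 - γ)) *
        ∑ s, ∑ a, occupancy P γ π s0 s a * advFn P R γ π' s a :=
  performance_difference_lemma_general P R γ hP hγ0 hγ1 π π' s0
end

section
/- (Imagined-return bound for sparse indicator rewards.) Let S be a nonempty finite set, let P and P̂ be two transition kernels assigning to each state-action pair a probability mass function on S, let π : S → A be a deterministic policy, let γ ∈ (0,1), let G ⊆ S be a goal region, and suppose IPM(P(·|s,a), P̂(·|s,a)) ≤ ε for all (s,a). For a rollout horizon τ ≥ 0 and initial state s0, let R*_τ = ∑_{ℓ=0}^τ γ^ℓ μ_ℓ(G) and R̂_τ = ∑_{ℓ=0}^τ γ^ℓ μ̂_ℓ(G), where μ_ℓ and μ̂_ℓ are the ℓ-step state distributions from s0 following π under P and P̂ respectively, and μ_ℓ(G) = ∑_{s∈G} μ_ℓ(s). Then R̂_τ ≥ R*_τ − (2γ/(1−γ)²) · ε. -/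
open Finset

/-! For every test function `f` with `|f| ≤ 1`, the expectations of `f` under
the `ℓ`-step distributions of the two kernels differ by at most `ℓ ε`, since each step adds
at most one IPM-error. Applied to `f = 1_G` this bounds the per-step gap by `ℓ ε`, and
`∑_ℓ ℓ γ^ℓ ≤ γ / (1 - γ)²`. -/

section IPM

variable {S : Type*} [Fintype S]

theorem IsPMF.abs_sum_mul_le {p f : S → ℝ} {c : ℝ} (hp : IsPMF p) (hf : ∀ s, |f s| ≤ c) :
    |∑ s, f s * p s| ≤ c :=
  calc |∑ s, f s * p s| ≤ ∑ s, |f s| * p s := by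
        simpa only [abs_mul, abs_of_nonneg (hp.1 _)] using abs_sum_le_sum_abs (fun s => f s * p s) univ
    _ ≤ ∑ s, c * p s := sum_le_sum fun s _ => mul_le_mul_of_nonneg_right (hf s) (hp.1 s)
    _ = c := by rw [← mul_sum, hp.2, mul_one]

theorem abs_sum_mul_sub_le_IPM {p q f : S → ℝ} (hp : IsPMF p) (hq : IsPMF q)
    (hf : ∀ s, |f s| ≤ 1) : |∑ s, f s * p s - ∑ s, f s * q s| ≤ IPM p q := by
  refine le_csSup ⟨2, ?_⟩ ⟨f, hf, rfl⟩
  rintro x ⟨g, hg, rfl⟩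
  calc |∑ s, g s * p s - ∑ s, g s * q s| ≤ |∑ s, g s * p s| + |∑ s, g s * q s| := abs_sub _ _
    _ ≤ 1 + 1 := add_le_add (hp.abs_sum_mul_le hg) (hq.abs_sum_mul_le hg)
    _ = 2 := by norm_num

theorem IPM_nonneg {p q : S → ℝ} (hp : IsPMF p) (hq : IsPMF q) : 0 ≤ IPM p q :=
  (abs_nonneg _).trans (abs_sum_mul_sub_le_IPM hp hq (f := 0) (by simp))

end IPM

section StateDist

variable {S A : Type*} [Fintype S] [DecidableEq S] {P Phat : S → A → S → ℝ} {π : S → A}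
  {s0 : S}

theorem sum_mul_stateDist_succ (f : S → ℝ) (t : ℕ) :
    ∑ s', f s' * stateDist P π s0 (t + 1) s' =
      ∑ s, (∑ s', f s' * P s (π s) s') * stateDist P π s0 t s := by
  simp only [stateDist, mul_sum, sum_mul]
  rw [sum_comm]
  exact sum_congr rfl fun _ _ => sum_congr rfl fun _ _ => by ring

theorem isPMF_stateDist (hP : ∀ s a, IsPMF (P s a)) (ℓ : ℕ) : IsPMF (stateDist P π s0 ℓ) := by
  induction ℓ with
  | zero => exact ⟨fun s => by simp only [stateDist]; split <;> norm_num, by simp [stateDist]⟩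
  | succ t ih =>
    refine ⟨fun s' => sum_nonneg fun s _ => mul_nonneg (ih.1 s) ((hP s (π s)).1 s'), ?_⟩
    simpa only [one_mul, (hP _ _).2, ih.2] using sum_mul_stateDist_succ (P := P) (π := π)
      (s0 := s0) (fun _ => 1) t

theorem abs_sum_mul_stateDist_sub_le {ε : ℝ} (hP : ∀ s a, IsPMF (P s a))
    (hPhat : ∀ s a, IsPMF (Phat s a)) (hIPM : ∀ s a, IPM (P s a) (Phat s a) ≤ ε)
    (ℓ : ℕ) {f : S → ℝ} (hf : ∀ s, |f s| ≤ 1) :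
    |∑ s, f s * stateDist P π s0 ℓ s - ∑ s, f s * stateDist Phat π s0 ℓ s| ≤ ℓ * ε := by
  induction ℓ generalizing f with
  | zero => simp [stateDist]
  | succ t ih =>
    set g : S → ℝ := fun s => ∑ s', f s' * P s (π s) s'
    set ghat : S → ℝ := fun s => ∑ s', f s' * Phat s (π s) s'
    have hg : ∀ s, |g s| ≤ 1 := fun s => (hP s (π s)).abs_sum_mul_le hf
    have hmodel : ∀ s, |g s - ghat s| ≤ ε := fun s =>
      (abs_sum_mul_sub_le_IPM (hP s (π s)) (hPhat s (π s)) hf).trans (hIPM s (π s))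
    have hsplit : ∑ s, f s * stateDist P π s0 (t + 1) s
          - ∑ s, f s * stateDist Phat π s0 (t + 1) s =
        (∑ s, g s * stateDist P π s0 t s - ∑ s, g s * stateDist Phat π s0 t s)
          + ∑ s, (g s - ghat s) * stateDist Phat π s0 t s := by
      rw [sum_mul_stateDist_succ, sum_mul_stateDist_succ]
      simp only [sub_mul, sum_sub_distrib]
      ring
    rw [hsplit]
    calc _ ≤ t * ε + ε := (abs_add_le _ _).trans <|
          add_le_add (ih hg) ((isPMF_stateDist (π := π) (s0 := s0) hPhat t).abs_sum_mul_le hmodel)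
      _ = (t + 1 : ℕ) * ε := by push_cast; ring

theorem sum_stateDist_sub_le {ε : ℝ} (hP : ∀ s a, IsPMF (P s a))
    (hPhat : ∀ s a, IsPMF (Phat s a)) (hIPM : ∀ s a, IPM (P s a) (Phat s a) ≤ ε)
    (G : Finset S) (ℓ : ℕ) :
    ∑ s ∈ G, stateDist P π s0 ℓ s - ∑ s ∈ G, stateDist Phat π s0 ℓ s ≤ ℓ * ε := by
  have hind : ∀ μ : S → ℝ, ∑ s, (if s ∈ G then 1 else 0) * μ s = ∑ s ∈ G, μ s := fun μ => by
    simp only [ite_mul, one_mul, zero_mul, sum_ite_mem, univ_inter]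
  have := abs_sum_mul_stateDist_sub_le (π := π) (s0 := s0) hP hPhat hIPM ℓ
    (f := fun s => if s ∈ G then 1 else 0)
    (fun s => by split <;> norm_num)
  rw [hind, hind] at this
  exact (le_abs_self _).trans this

end StateDist

theorem sum_range_pow_mul_le {γ : ℝ} (hγ0 : 0 ≤ γ) (hγ1 : γ < 1) (n : ℕ) :
    ∑ ℓ ∈ range n, γ ^ ℓ * ℓ ≤ γ / (1 - γ) ^ 2 := by
  have hsum := hasSum_coe_mul_geometric_of_norm_lt_one (by rwa [Real.norm_of_nonneg hγ0])
  simp only [mul_comm (_ : ℝ) (γ ^ _)] at hsum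
  exact sum_le_hasSum _ (fun ℓ _ => by positivity) hsum

theorem imagined_return_bound_general
    {S A : Type*} [Fintype S] [DecidableEq S]
    (P Phat : S → A → S → ℝ) (γ ε : ℝ)
    (hP : ∀ s a, IsPMF (P s a)) (hPhat : ∀ s a, IsPMF (Phat s a))
    (π : S → A)
    (hγ0 : 0 < γ) (hγ1 : γ < 1)
    (G : Finset S)
    (hIPM : ∀ s a, IPM (P s a) (Phat s a) ≤ ε)
    (s0 : S) (τ : ℕ) :
    ∑ ℓ ∈ Finset.range (τ + 1), γ ^ ℓ * ∑ s ∈ G, stateDist Phat π s0 ℓ s ≥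
      (∑ ℓ ∈ Finset.range (τ + 1), γ ^ ℓ * ∑ s ∈ G, stateDist P π s0 ℓ s) -
        (2 * γ / (1 - γ) ^ 2) * ε := by
  have hε : 0 ≤ ε := (IPM_nonneg (hP s0 (π s0)) (hPhat s0 (π s0))).trans (hIPM s0 (π s0))
  have hgap : (∑ ℓ ∈ range (τ + 1), γ ^ ℓ * ∑ s ∈ G, stateDist P π s0 ℓ s)
      - ∑ ℓ ∈ range (τ + 1), γ ^ ℓ * ∑ s ∈ G, stateDist Phat π s0 ℓ s
      ≤ (2 * γ / (1 - γ) ^ 2) * ε :=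
    calc _ = ∑ ℓ ∈ range (τ + 1), γ ^ ℓ * (∑ s ∈ G, stateDist P π s0 ℓ s
              - ∑ s ∈ G, stateDist Phat π s0 ℓ s) := by simp only [mul_sub, sum_sub_distrib]
      _ ≤ ∑ ℓ ∈ range (τ + 1), γ ^ ℓ * (ℓ * ε) := sum_le_sum fun ℓ _ =>
          mul_le_mul_of_nonneg_left (sum_stateDist_sub_le hP hPhat hIPM G ℓ) (by positivity)
      _ = (∑ ℓ ∈ range (τ + 1), γ ^ ℓ * ℓ) * ε := by simp only [sum_mul, mul_assoc]
      _ ≤ (γ / (1 - γ) ^ 2) * ε :=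
          mul_le_mul_of_nonneg_right (sum_range_pow_mul_le hγ0.le hγ1 _) hε
      _ ≤ (2 * γ / (1 - γ) ^ 2) * ε := by
          gcongr
          linarith
  linarith

/-- **Imagined-return bound for sparse indicator rewards.** For the sparse reward
`1[s ∈ G]`, the imagined `τ`-step discounted return under the learned kernel is at
most `(2γ/(1-γ)²)·ε` below the true `τ`-step discounted return. -/
theorem imagined_return_bound
    {S A : Type*} [Fintype S] [DecidableEq S] [Nonempty S]
    (P Phat : S → A → S → ℝ) (γ ε : ℝ)
    (hP : ∀ s a, IsPMF (P s a)) (hPhat : ∀ s a, IsPMF (Phat s a))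
    (π : S → A)
    (hγ0 : 0 < γ) (hγ1 : γ < 1)
    (G : Finset S)
    (hIPM : ∀ s a, IPM (P s a) (Phat s a) ≤ ε)
    (s0 : S) (τ : ℕ) :
    ∑ ℓ ∈ Finset.range (τ + 1), γ ^ ℓ * ∑ s ∈ G, stateDist Phat π s0 ℓ s ≥
      (∑ ℓ ∈ Finset.range (τ + 1), γ ^ ℓ * ∑ s ∈ G, stateDist P π s0 ℓ s) -
        (2 * γ / (1 - γ) ^ 2) * ε :=
  imagined_return_bound_general P Phat γ ε hP hPhat π hγ0 hγ1 G hIPM s0 τ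
end
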